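/- Let N ∈ ℕ, a ∈ ℝ, δ > 0, A = diag(a − (0π)², …, a − (Nπ)²) ∈ ℝ^{(N+1)×(N+1)}, and C = (1, √2, √2, …, √2) ∈ ℝ^{1×(N+1)}. Then there exist a column vector L ∈ ℝ^{N+1} and a symmetric positive-definite matrix Q ∈ ℝ^{(N+1)×(N+1)} such that Q(A + LC) + (A + LC)ᵀQ ≺ −2δQ, i.e. Q(A + LC) + (A + LC)ᵀQ + 2δQ is negative definite. -/

import Mathlib

/-!
Pole placement followed by a change of basis. Since `A` is diagonal with distinct entries `νᵢ`
and every entry of `C` is nonzero, for any distinct targets `μⱼ` outside `{νᵢ}` the Cauchy system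
`∑ᵢ ℓᵢ cᵢ / (μⱼ - νᵢ) = 1` is solvable (by partial fractions of `∏ (x - μₖ) / ∏ (x - νₖ)`), and
then `wⱼ = (cᵢ / (μⱼ - νᵢ))ᵢ` is a left eigenvector of `A + LC` for `μⱼ`. With `W` the matrix of
these rows, `W (A + LC) = diag(μ) W`, so `Q = Wᵀ W` turns `Q(A + LC) + (A + LC)ᵀQ + 2δQ` into
`Wᵀ diag(2μ + 2δ) W`, which is negative definite once every `μⱼ < -δ`.
-/

open Matrix

/-- The diagonal matrix `A = diag(a - (0π)², …, a - (Nπ)²)`. -/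
noncomputable def Amat (N : ℕ) (a : ℝ) : Matrix (Fin (N + 1)) (Fin (N + 1)) ℝ :=
  Matrix.diagonal fun n : Fin (N + 1) => a - ((n : ℕ) * Real.pi) ^ 2

/-- The row vector `C = (1, √2, √2, …, √2)`. -/
noncomputable def Cmat (N : ℕ) : Matrix (Fin 1) (Fin (N + 1)) ℝ :=
  Matrix.of fun _ j => if (j : ℕ) = 0 then (1 : ℝ) else Real.sqrt 2

open Polynomial Lagrange Finset

theorem exists_injective_forall_lt_notMem_range {α ι : Type*} [Preorder α] [NoMinOrder α]
    [Finite ι] (ν : ι → α) (b : α) :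
    ∃ μ : ι → α, Function.Injective μ ∧ ∀ j, μ j < b ∧ μ j ∉ Set.range ν := by
  have hs : (Set.Iio b \ Set.range ν).Infinite := (Set.Iio_infinite b).sdiff (Set.finite_range ν)
  obtain ⟨e⟩ := nonempty_embedding_nat ι
  let f := e.trans (hs.natEmbedding _)
  exact ⟨fun j => f j, Subtype.val_injective.comp f.injective, fun j => (f j).2⟩

section PolePlacement

variable {F ι : Type*} [Field F] [Fintype ι] [DecidableEq ι]

/-- The partial fraction expansion
`∏ₖ (x - μₖ) / ∏ₖ (x - νₖ) = 1 + ∑ᵢ wᵢ ∏ₖ (νᵢ - μₖ) / (x - νᵢ)` (`wᵢ` the nodal weights),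
evaluated at `x = μⱼ`. -/
theorem Lagrange.sum_nodalWeight_mul_inv_sub_mul_eval_nodal {ν μ : ι → F}
    (hν : Function.Injective ν) (hμν : ∀ i j, μ j ≠ ν i) (j : ι) :
    ∑ i, nodalWeight univ ν i * (μ j - ν i)⁻¹ * eval (ν i) (nodal univ μ) = -1 := by
  set f := nodal univ μ - nodal univ ν
  have hdeg : f.degree < #(univ : Finset ι) := by
    rw [← degree_nodal (v := μ)]
    exact degree_sub_lt_left (by rw [degree_nodal, degree_nodal]) nodal_ne_zero
      (by rw [nodal_monic.leadingCoeff, nodal_monic.leadingCoeff])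
  have hf := congrArg (eval (μ j)) (eq_interpolate hν.injOn hdeg)
  rw [eval_interpolate_not_at_node _ fun i _ => hμν i j] at hf
  simp only [f, eval_sub, eval_nodal_at_node (mem_univ _), sub_zero, zero_sub] at hf
  have hne : eval (μ j) (nodal univ ν) ≠ 0 := eval_nodal_not_at_node fun i _ => hμν i j
  exact mul_left_cancel₀ hne (by rw [← hf]; ring)

namespace Matrix

theorem exists_dotProduct_div_sub_eq_one {ν μ c : ι → F} (hν : Function.Injective ν)
    (hμν : ∀ i j, μ j ≠ ν i) (hc : ∀ i, c i ≠ 0) :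
    ∃ ℓ : ι → F, ∀ j, ℓ ⬝ᵥ (fun i => c i / (μ j - ν i)) = 1 := by
  refine ⟨fun i => -(nodalWeight univ ν i * eval (ν i) (nodal univ μ)) / c i, fun j => ?_⟩
  rw [← neg_neg (1 : F), ← sum_nodalWeight_mul_inv_sub_mul_eval_nodal hν hμν j, dotProduct,
    ← sum_neg_distrib]
  refine sum_congr rfl fun i _ => ?_
  field_simp [hc i, sub_ne_zero.2 (hμν i j)]

theorem vecMul_diagonal_add_vecMulVec {ν ℓ c : ι → F} {μ : F} (hμ : ∀ i, μ ≠ ν i)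
    (hℓ : ℓ ⬝ᵥ (fun i => c i / (μ - ν i)) = 1) :
    (fun i => c i / (μ - ν i)) ᵥ* (diagonal ν + vecMulVec ℓ c) = μ • fun i => c i / (μ - ν i) := by
  rw [vecMul_add, vecMul_vecMulVec, dotProduct_comm, hℓ, one_smul]
  ext i
  simp only [vecMul_diagonal, Pi.add_apply, Pi.smul_apply, smul_eq_mul]
  field_simp [sub_ne_zero.2 (hμ i)]
  ring

end Matrix

end PolePlacement

namespace Matrix

variable {n : Type*} [Fintype n] [DecidableEq n]

theorem posDef_neg_lyapunov_of_mul_eq_diagonal_mul {M W : Matrix n n ℝ} {μ : n → ℝ} {δ : ℝ}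
    (hW : IsUnit W) (hWM : W * M = diagonal μ * W) (hμ : ∀ j, μ j < -δ) :
    (-(Wᵀ * W * M + Mᵀ * (Wᵀ * W) + (2 * δ) • (Wᵀ * W))).PosDef := by
  have hMW : Mᵀ * Wᵀ = Wᵀ * diagonal μ := by
    rw [← transpose_mul, hWM, transpose_mul, diagonal_transpose]
  have hD : diagonal (fun j => -2 * (μ j + δ)) = -(diagonal μ + diagonal μ + (2 * δ) • 1) := by
    ext i j
    rcases eq_or_ne i j with rfl | h <;> simp [*]
    ring
  have h : -(Wᵀ * W * M + Mᵀ * (Wᵀ * W) + (2 * δ) • (Wᵀ * W)) =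
      Wᴴ * diagonal (fun j => -2 * (μ j + δ)) * W := by
    rw [conjTranspose_eq_transpose_of_trivial, Matrix.mul_assoc, hWM, ← Matrix.mul_assoc Mᵀ, hMW,
      hD]
    simp only [Matrix.mul_neg, Matrix.neg_mul, Matrix.mul_add, Matrix.add_mul, Matrix.mul_smul,
      Matrix.smul_mul, Matrix.mul_one, Matrix.mul_assoc]
  rw [h]
  exact (posDef_diagonal_iff.2 fun j => by linarith [hμ j]).conjTranspose_mul_mul_same
    (mulVec_injective_of_isUnit hW)

theorem exists_lyapunov_of_left_eigenvectors {M : Matrix n n ℝ} {w : n → n → ℝ} {μ : n → ℝ}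
    {δ : ℝ} (hμ : Function.Injective μ) (hw : ∀ j, w j ≠ 0) (hwM : ∀ j, w j ᵥ* M = μ j • w j)
    (hμδ : ∀ j, μ j < -δ) :
    ∃ Q : Matrix n n ℝ, Q.PosDef ∧ (-(Q * M + Mᵀ * Q + (2 * δ) • Q)).PosDef := by
  set W := Matrix.of w
  have hW : IsUnit W := by
    rw [← linearIndependent_rows_iff_isUnit]
    refine Module.End.eigenvectors_linearIndependent' (Mᵀ).mulVecLin μ hμ w fun j =>
      Module.End.hasEigenvector_iff.2 ⟨Module.End.mem_eigenspace_iff.2 ?_, hw j⟩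
    rw [mulVecLin_apply, mulVec_transpose, hwM]
  have hWM : W * M = diagonal μ * W := by
    ext j i
    rw [diagonal_mul]
    exact congrFun (hwM j) i
  refine ⟨Wᵀ * W, ?_, posDef_neg_lyapunov_of_mul_eq_diagonal_mul hW hWM hμδ⟩
  simpa using PosDef.conjTranspose_mul_self W (mulVec_injective_of_isUnit hW)

theorem exists_lyapunov_diagonal_add_vecMulVec {ν c : n → ℝ} (hν : Function.Injective ν)
    (hc : ∀ i, c i ≠ 0) (δ : ℝ) :
    ∃ (ℓ : n → ℝ) (Q : Matrix n n ℝ), Q.PosDef ∧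
      (-(Q * (diagonal ν + vecMulVec ℓ c) + (diagonal ν + vecMulVec ℓ c)ᵀ * Q +
        (2 * δ) • Q)).PosDef := by
  obtain ⟨μ, hμ, hμν⟩ := exists_injective_forall_lt_notMem_range ν (-δ)
  have hμν' (i j) : μ j ≠ ν i := fun h => (hμν j).2 ⟨i, h.symm⟩
  obtain ⟨ℓ, hℓ⟩ := exists_dotProduct_div_sub_eq_one hν hμν' hc
  exact ⟨ℓ, exists_lyapunov_of_left_eigenvectors hμ (fun j h => by simpa [h] using hℓ j)
    (fun j => vecMul_diagonal_add_vecMulVec (fun i => hμν' i j) (hℓ j)) fun j => (hμν j).1⟩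

end Matrix

theorem stmt7_general (N : ℕ) (a : ℝ) (δ : ℝ) :
    ∃ (L : Matrix (Fin (N + 1)) (Fin 1) ℝ) (Q : Matrix (Fin (N + 1)) (Fin (N + 1)) ℝ),
      Q.PosDef ∧
      (-(Q * (Amat N a + L * Cmat N) + (Amat N a + L * Cmat N)ᵀ * Q + (2 * δ) • Q)).PosDef := by
  have hν : Function.Injective fun i : Fin (N + 1) => a - ((i : ℕ) * Real.pi) ^ 2 := by
    intro i k h
    have h' : ((i : ℕ) * Real.pi) ^ 2 = ((k : ℕ) * Real.pi) ^ 2 := by simpa using h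
    rw [sq_eq_sq₀ (by positivity) (by positivity), mul_left_inj' Real.pi_ne_zero] at h'
    exact Fin.ext (by exact_mod_cast h')
  have hc (j : Fin (N + 1)) : (if (j : ℕ) = 0 then (1 : ℝ) else Real.sqrt 2) ≠ 0 := by
    split_ifs <;> positivity
  obtain ⟨ℓ, Q, hQ⟩ := exists_lyapunov_diagonal_add_vecMulVec hν hc δ
  exact ⟨replicateCol (Fin 1) ℓ, Q, by rwa [vecMulVec_eq (Fin 1)] at hQ⟩

/-- there exist an observer gain column vector `L` and a symmetric
positive-definite matrix `Q` with `Q(A + LC) + (A + LC)ᵀQ + 2δQ` negative definite,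
i.e. `Q(A + LC) + (A + LC)ᵀQ ≺ -2δQ`. -/
theorem stmt7 (N : ℕ) (a : ℝ) (δ : ℝ) (hδ : 0 < δ) :
    ∃ (L : Matrix (Fin (N + 1)) (Fin 1) ℝ) (Q : Matrix (Fin (N + 1)) (Fin (N + 1)) ℝ),
      Q.PosDef ∧
      (-(Q * (Amat N a + L * Cmat N) + (Amat N a + L * Cmat N)ᵀ * Q + (2 * δ) • Q)).PosDef :=
  stmt7_general N a δ
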